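/- Let Δ = Δ_0 + Δ_1 + ⋯ + Δ_k be a Minkowski sum decomposition of a reflexive polytope Δ ⊂ ℝ^d into lattice polytopes. Then the Cayley cone σ̄ ⊂ ℝ^d ⊕ ℝ^{k+1} is a reflexive Gorenstein cone of index k+1, with distinguished points n_σ̄ = r_0* + r_1* + ⋯ + r_k* and m_{σ̄∨} = r_0 + r_1 + ⋯ + r_k; that is, every primitive lattice generator of σ̄ pairs to 1 with r_0* + ⋯ + r_k*, every primitive lattice generator of σ̄∨ pairs to 1 with r_0 + ⋯ + r_k, and the index ⟨m_{σ̄∨}, n_σ̄⟩ equals k+1. -/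

import Mathlib

open scoped Pointwise
open Set

noncomputable section

/-- The standard pairing on `ℝ^n`. -/
def pairing {n : ℕ} (x y : Fin n → ℝ) : ℝ := ∑ i, x i * y i

/-- A point of `ℝ^n` lying in the lattice `ℤ^n`. -/
def IsLatticePt {n : ℕ} (x : Fin n → ℝ) : Prop := ∀ i, ∃ z : ℤ, x i = (z : ℝ)

/-- A lattice polytope: the convex hull of finitely many lattice points. -/
def IsLatticePolytope {n : ℕ} (P : Set (Fin n → ℝ)) : Prop :=
  ∃ S : Set (Fin n → ℝ), S.Finite ∧ (∀ x ∈ S, IsLatticePt x) ∧ P = convexHull ℝ S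

/-- The dual polytope `P* = {y | ⟨x,y⟩ ≥ -1 ∀ x ∈ P}`. -/
def polarDual {n : ℕ} (P : Set (Fin n → ℝ)) : Set (Fin n → ℝ) :=
  {y | ∀ x ∈ P, -1 ≤ pairing x y}

/-- A reflexive polytope. -/
def IsReflexive {n : ℕ} (P : Set (Fin n → ℝ)) : Prop :=
  IsLatticePolytope P ∧ (0 : Fin n → ℝ) ∈ interior P ∧ IsLatticePolytope (polarDual P)

/-- `min⟨P, u⟩ = min_{x ∈ P} ⟨x, u⟩`. -/
def minPair {n : ℕ} (P : Set (Fin n → ℝ)) (u : Fin n → ℝ) : ℝ :=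
  sInf ((fun x => pairing x u) '' P)

/-- The real vector space `ℝ^d ⊕ ℝ^k`. -/
abbrev Vdk (d k : ℕ) := (Fin d → ℝ) × (Fin k → ℝ)

/-- The pairing on `ℝ^d ⊕ ℝ^k` (sum of the two standard pairings). -/
def pairingV {d k : ℕ} (x y : Vdk d k) : ℝ := pairing x.1 y.1 + pairing x.2 y.2

def IsLatticePtV {d k : ℕ} (x : Vdk d k) : Prop := IsLatticePt x.1 ∧ IsLatticePt x.2

def IsLatticePolytopeV {d k : ℕ} (P : Set (Vdk d k)) : Prop :=
  ∃ S : Set (Vdk d k), S.Finite ∧ (∀ x ∈ S, IsLatticePtV x) ∧ P = convexHull ℝ S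

def polarDualV {d k : ℕ} (P : Set (Vdk d k)) : Set (Vdk d k) :=
  {y | ∀ x ∈ P, -1 ≤ pairingV x y}

def IsReflexiveV {d k : ℕ} (P : Set (Vdk d k)) : Prop :=
  IsLatticePolytopeV P ∧ (0 : Vdk d k) ∈ interior P ∧ IsLatticePolytopeV (polarDualV P)

/-- The Cayley cone `σ̄ = {(t₀Δ₀ + ⋯ + t_kΔ_k, t₀, …, t_k) : tᵢ ≥ 0} ⊆ ℝ^d ⊕ ℝ^{k+1}`. -/
def cayleyCone {d k : ℕ} (Δ : Fin (k+1) → Set (Fin d → ℝ)) : Set (Vdk d (k+1)) :=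
  {p | (∀ i, 0 ≤ p.2 i) ∧ p.1 ∈ ∑ i, p.2 i • Δ i}

/-- The dual cone of a cone in `ℝ^d ⊕ ℝ^k`. -/
def dualConeV {d k : ℕ} (σ : Set (Vdk d k)) : Set (Vdk d k) :=
  {y | ∀ x ∈ σ, 0 ≤ pairingV x y}

/-- `v` is a primitive lattice generator of the cone `σ`: a lattice point which is the
shortest lattice point on an extreme ray of `σ`. -/
def IsPrimitiveGenerator {d k : ℕ} (σ : Set (Vdk d k)) (v : Vdk d k) : Prop :=
  IsLatticePtV v ∧ v ≠ 0 ∧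
    IsExtreme ℝ σ {z | ∃ t : ℝ, 0 ≤ t ∧ z = t • v} ∧
    ∀ t : ℝ, 0 < t → t < 1 → ¬ IsLatticePtV (t • v)

/-!
Every point of the Cayley cone is `cayleyMap g t = (∑ tᵢ gᵢ, t)` with `gᵢ ∈ Δᵢ`, and its dual cone
is `{(u, s) | min⟨Δᵢ, u⟩ + sᵢ ≥ 0 for all i}`. Splitting off one index shows that an extreme ray
of `σ̄` uses a single `i`, and then a vertex `g` of `Δᵢ`: it is spanned by the lattice point
`(g, rᵢ)`. An extreme ray of `σ̄∨` is either spanned by some `rᵢ`, or all its inequalities are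
tight and it is spanned by `(y, -min⟨Δ₀, y⟩, …, -min⟨Δ_k, y⟩)`; as `min⟨Δ, y⟩ = ∑ min⟨Δᵢ, y⟩`, the
point `y`, normalised by `min⟨Δ, y⟩ = -1` (possible since `0 ∈ int Δ`), is a vertex of `Δ*`,
hence a lattice point by reflexivity. Each of these lattice points pairs to `1` with the
distinguished vector, so the primitive generator, a positive multiple of it, is an integer
multiple and primitivity forces the multiple to be `1`.
-/

section Pairing

variable {n : ℕ}

lemma pairing_eq_dotProduct (x y : Fin n → ℝ) : pairing x y = x ⬝ᵥ y := rfl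

lemma pairing_comm (x y : Fin n → ℝ) : pairing x y = pairing y x := dotProduct_comm x y

lemma pairing_add_right (x y y' : Fin n → ℝ) :
    pairing x (y + y') = pairing x y + pairing x y' := dotProduct_add x y y'

lemma pairing_smul_left (c : ℝ) (x y : Fin n → ℝ) : pairing (c • x) y = c * pairing x y :=
  smul_dotProduct c x y

lemma pairing_smul_right (c : ℝ) (x y : Fin n → ℝ) : pairing x (c • y) = c * pairing x y :=
  dotProduct_smul c x y

lemma pairing_sum_left {ι : Type*} (s : Finset ι) (x : ι → Fin n → ℝ) (y : Fin n → ℝ) :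
    pairing (∑ i ∈ s, x i) y = ∑ i ∈ s, pairing (x i) y :=
  sum_dotProduct s x y

lemma pairing_self_pos {x : Fin n → ℝ} (hx : x ≠ 0) : 0 < pairing x x :=
  lt_of_le_of_ne (Finset.sum_nonneg fun i _ => mul_self_nonneg (x i))
    (Ne.symm (dotProduct_self_eq_zero.not.2 hx))

lemma IsLatticePt.exists_int_pairing {x y : Fin n → ℝ} (hx : IsLatticePt x)
    (hy : IsLatticePt y) : ∃ z : ℤ, pairing x y = z := by
  choose a ha using hx
  choose b hb using hy
  exact ⟨∑ i, a i * b i, by simp [pairing, ha, hb]⟩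

lemma pairingV_comm {d k : ℕ} (x y : Vdk d k) : pairingV x y = pairingV y x := by
  rw [pairingV, pairingV, pairing_comm x.1, pairing_comm x.2]

lemma pairingV_smul_left {d k : ℕ} (c : ℝ) (x y : Vdk d k) :
    pairingV (c • x) y = c * pairingV x y := by
  rw [pairingV, pairingV, Prod.smul_fst, Prod.smul_snd, pairing_smul_left, pairing_smul_left,
    mul_add]

lemma IsLatticePtV.exists_int_pairingV {d k : ℕ} {x y : Vdk d k} (hx : IsLatticePtV x)
    (hy : IsLatticePtV y) : ∃ z : ℤ, pairingV x y = z := by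
  obtain ⟨a, ha⟩ := hx.1.exists_int_pairing hy.1
  obtain ⟨b, hb⟩ := hx.2.exists_int_pairing hy.2
  exact ⟨a + b, by rw [pairingV, ha, hb]; push_cast; rfl⟩

lemma isLatticePt_pi_single_one {n : ℕ} (i : Fin n) : IsLatticePt (Pi.single i (1 : ℝ)) :=
  fun j => ⟨if j = i then 1 else 0, by rcases eq_or_ne j i with rfl | h <;> simp [*]⟩

lemma isLatticePtV_zero_one {d k : ℕ} : IsLatticePtV ((0, fun _ => 1) : Vdk d k) :=
  ⟨fun _ => ⟨0, by simp⟩, fun _ => ⟨1, by simp⟩⟩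

end Pairing

section MinPair

variable {n : ℕ} {P : Set (Fin n → ℝ)}

lemma IsLatticePolytope.exists_isLatticePt_isMinOn (hP : IsLatticePolytope P) (hne : P.Nonempty)
    (u : Fin n → ℝ) : ∃ x ∈ P, IsLatticePt x ∧ IsMinOn (pairing · u) P x := by
  obtain ⟨S, hSfin, hSlat, rfl⟩ := hP
  obtain ⟨x, hxS, hmin⟩ :=
    hSfin.toFinset.exists_min_image (pairing · u) (by simpa using convexHull_nonempty_iff.1 hne)
  rw [Set.Finite.mem_toFinset] at hxS
  refine ⟨x, subset_convexHull ℝ S hxS, hSlat x hxS, fun y hy => ?_⟩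
  have hhalf : Convex ℝ {y | pairing x u ≤ pairing y u} :=
    convex_halfSpace_ge ⟨fun y y' => add_dotProduct y y' u, fun c y => smul_dotProduct c y u⟩ _
  exact convexHull_min (fun y hy => hmin y (by simpa using hy)) hhalf hy

lemma IsMinOn.minPair_eq {x u : Fin n → ℝ} (hx : x ∈ P) (hmin : IsMinOn (pairing · u) P x) :
    minPair P u = pairing x u :=
  IsLeast.csInf_eq ⟨Set.mem_image_of_mem _ hx, Set.forall_mem_image.2 hmin⟩

lemma minPair_le (hP : IsLatticePolytope P) (hne : P.Nonempty) {x : Fin n → ℝ}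
    (u : Fin n → ℝ) (hx : x ∈ P) : minPair P u ≤ pairing x u := by
  obtain ⟨x₀, hx₀, -, hmin⟩ := hP.exists_isLatticePt_isMinOn hne u
  exact (hmin.minPair_eq hx₀).trans_le (hmin hx)

lemma minPair_zero (hne : P.Nonempty) : minPair P 0 = 0 := by
  simp [minPair, pairing_eq_dotProduct, hne.image_const]

lemma minPair_smul (hP : IsLatticePolytope P) (hne : P.Nonempty) {c : ℝ} (hc : 0 ≤ c)
    (u : Fin n → ℝ) : minPair P (c • u) = c * minPair P u := by
  obtain ⟨x, hx, -, hmin⟩ := hP.exists_isLatticePt_isMinOn hne u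
  have hmin' : IsMinOn (pairing · (c • u)) P x := fun y hy => by
    simpa only [Set.mem_ofPred_eq, pairing_smul_right] using
      mul_le_mul_of_nonneg_left (hmin hy) hc
  rw [hmin'.minPair_eq hx, hmin.minPair_eq hx, pairing_smul_right]

lemma add_le_minPair_add (hP : IsLatticePolytope P) (hne : P.Nonempty) (u v : Fin n → ℝ) :
    minPair P u + minPair P v ≤ minPair P (u + v) := by
  obtain ⟨x, hx, -, hmin⟩ := hP.exists_isLatticePt_isMinOn hne (u + v)
  rw [hmin.minPair_eq hx, pairing_add_right]
  exact add_le_add (minPair_le hP hne u hx) (minPair_le hP hne v hx)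

lemma IsLatticePolytope.exists_int_minPair (hP : IsLatticePolytope P) (hne : P.Nonempty)
    {u : Fin n → ℝ} (hu : IsLatticePt u) : ∃ z : ℤ, minPair P u = z := by
  obtain ⟨x, hx, hxlat, hmin⟩ := hP.exists_isLatticePt_isMinOn hne u
  rw [hmin.minPair_eq hx]
  exact hxlat.exists_int_pairing hu

lemma exists_neg_smul_mem_of_mem_interior (h0 : (0 : Fin n → ℝ) ∈ interior P)
    (u : Fin n → ℝ) : ∃ c : ℝ, 0 < c ∧ (-c) • u ∈ P := by
  have hcont : Filter.Tendsto (fun c : ℝ => (-c) • u) (nhdsWithin 0 (Set.Ioi 0)) (nhds 0) := by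
    have hc : Continuous fun c : ℝ => (-c) • u := continuous_neg.smul continuous_const
    simpa using (hc.tendsto 0).mono_left nhdsWithin_le_nhds
  exact ((hcont.eventually (mem_interior_iff_mem_nhds.1 h0)).and self_mem_nhdsWithin).exists
    |>.imp fun c h => ⟨h.2, h.1⟩

lemma minPair_neg_of_mem_interior (hP : IsLatticePolytope P) (h0 : (0 : Fin n → ℝ) ∈ interior P)
    {u : Fin n → ℝ} (hu : u ≠ 0) : minPair P u < 0 := by
  obtain ⟨c, hc, hmem⟩ := exists_neg_smul_mem_of_mem_interior h0 u
  calc minPair P u ≤ pairing ((-c) • u) u := minPair_le hP ⟨_, hmem⟩ u hmem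
    _ = -(c * pairing u u) := by rw [pairing_smul_left, neg_mul]
    _ < 0 := neg_neg_of_pos (mul_pos hc (pairing_self_pos hu))

lemma IsMinOn.sum {ι : Type*} [Fintype ι] {Q : ι → Set (Fin n → ℝ)} {x : ι → Fin n → ℝ}
    {u : Fin n → ℝ} (hmin : ∀ i, IsMinOn (pairing · u) (Q i) (x i)) :
    IsMinOn (pairing · u) (∑ i, Q i) (∑ i, x i) := fun y hy => by
  obtain ⟨y', hy', rfl⟩ := (Set.mem_fintype_sum _ _).1 hy
  simp only [Set.mem_ofPred_eq, pairing_sum_left]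
  exact Finset.sum_le_sum fun i _ => hmin i (hy' i)

lemma minPair_sum {ι : Type*} [Fintype ι] {Q : ι → Set (Fin n → ℝ)}
    (hQ : ∀ i, IsLatticePolytope (Q i)) (hne : ∀ i, (Q i).Nonempty) (u : Fin n → ℝ) :
    minPair (∑ i, Q i) u = ∑ i, minPair (Q i) u := by
  choose x hx _ hmin using fun i => (hQ i).exists_isLatticePt_isMinOn (hne i) u
  rw [(IsMinOn.sum hmin).minPair_eq ((Set.mem_fintype_sum _ _).2 ⟨x, hx, rfl⟩), pairing_sum_left]
  exact Finset.sum_congr rfl fun i _ => ((hmin i).minPair_eq (hx i)).symm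

lemma IsMinOn.mem_polarDual_iff {x y : Fin n → ℝ} (hx : x ∈ P)
    (hmin : IsMinOn (pairing · y) P x) : y ∈ polarDual P ↔ -1 ≤ pairing x y :=
  ⟨fun h => h x hx, fun h _ hx' => h.trans (hmin hx')⟩

lemma mem_polarDual_sum_iff {ι : Type*} [Fintype ι] {Q : ι → Set (Fin n → ℝ)}
    (hQ : ∀ i, IsLatticePolytope (Q i)) (hne : ∀ i, (Q i).Nonempty) {y : Fin n → ℝ} :
    y ∈ polarDual (∑ i, Q i) ↔ -1 ≤ ∑ i, minPair (Q i) y := by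
  choose x hx _ hmin using fun i => (hQ i).exists_isLatticePt_isMinOn (hne i) y
  rw [(IsMinOn.sum hmin).mem_polarDual_iff ((Set.mem_fintype_sum _ _).2 ⟨x, hx, rfl⟩),
    pairing_sum_left, Finset.sum_congr rfl fun i _ => ((hmin i).minPair_eq (hx i)).symm]

lemma IsLatticePolytope.isLatticePt_of_mem_extremePoints (hP : IsLatticePolytope P)
    {x : Fin n → ℝ} (hx : x ∈ Set.extremePoints ℝ P) : IsLatticePt x := by
  obtain ⟨S, -, hSlat, rfl⟩ := hP
  exact hSlat x (extremePoints_convexHull_subset hx)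

end MinPair

section Ray

variable {E : Type*} [AddCommGroup E] [Module ℝ E]

def nonnegRay (v : E) : Set E := {z | ∃ t : ℝ, 0 ≤ t ∧ z = t • v}

lemma self_mem_nonnegRay (v : E) : v ∈ nonnegRay v := ⟨1, zero_le_one, (one_smul ℝ v).symm⟩

lemma IsExtreme.exists_eq_smul_of_add_eq {σ : Set E} {v P Q : E}
    (hσ : ∀ x ∈ σ, ∀ c : ℝ, 0 ≤ c → c • x ∈ σ) (hv : IsExtreme ℝ σ (nonnegRay v))
    (hP : P ∈ σ) (hQ : Q ∈ σ) (hPQ : P + Q = v) : ∃ t : ℝ, P = t • v := by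
  have hmid : v ∈ openSegment ℝ ((2 : ℝ) • P) ((2 : ℝ) • Q) :=
    ⟨1 / 2, 1 / 2, by norm_num, by norm_num, by norm_num, by
      rw [smul_smul, smul_smul, ← hPQ]; norm_num⟩
  obtain ⟨t, -, ht⟩ :=
    hv.2 (hσ P hP 2 zero_le_two) (hσ Q hQ 2 zero_le_two) (self_mem_nonnegRay v) hmid
  refine ⟨t / 2, ?_⟩
  rw [div_eq_inv_mul, mul_smul, ← ht, smul_smul]
  norm_num

lemma eq_pi_single_of_forall_exists_smul {ι R : Type*} [DecidableEq ι] [MonoidWithZero R]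
    [NoZeroDivisors R] {s : ι → R} (h : ∀ j, ∃ t : R, Pi.single j (s j) = t • s) {i : ι}
    (hi : s i ≠ 0) : s = Pi.single i (s i) := by
  funext j
  rcases eq_or_ne j i with rfl | hji
  · simp
  obtain ⟨t, ht⟩ := h j
  have ht0 : t = 0 := by
    simpa [hji.symm, hi] using congrFun ht i
  simpa [hji, ht0] using congrFun ht j

lemma exists_eq_smul_single_of_isExtreme {ι : Type*} [DecidableEq ι] {σ : Set (E × (ι → ℝ))}
    (hσ : ∀ x ∈ σ, ∀ c : ℝ, 0 ≤ c → c • x ∈ σ)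
    (L : (ι → ℝ) →ₗ[ℝ] E × (ι → ℝ)) (hL : ∀ t, (L t).2 = t) (hLσ : ∀ t, 0 ≤ t → L t ∈ σ)
    {v : E × (ι → ℝ)} (hv : IsExtreme ℝ σ (nonnegRay v)) (hv0 : v ≠ 0) (hvL : L v.2 = v)
    (hvnn : 0 ≤ v.2) : ∃ i, 0 < v.2 i ∧ v = v.2 i • L (Pi.single i 1) := by
  have hsplit : ∀ j, ∃ t : ℝ, Pi.single j (v.2 j) = t • v.2 := fun j => by
    have hrest : 0 ≤ v.2 - Pi.single j (v.2 j) := fun m => by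
      rcases eq_or_ne m j with rfl | hmj
      · simp
      · simpa [hmj] using hvnn m
    obtain ⟨t, ht⟩ := hv.exists_eq_smul_of_add_eq hσ
      (hLσ _ (Pi.single_nonneg.2 (hvnn j))) (hLσ _ hrest) (by rw [← map_add, add_sub_cancel, hvL])
    exact ⟨t, by rw [← hL (Pi.single j _), ht, Prod.smul_snd]⟩
  obtain ⟨i, hi⟩ : ∃ i, v.2 i ≠ 0 := by
    by_contra! h
    exact hv0 (by rw [← hvL, show v.2 = 0 from funext h, map_zero])
  refine ⟨i, (hvnn i).lt_of_ne' hi, ?_⟩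
  rw [← map_smul, ← Pi.single_smul', smul_eq_mul, mul_one,
    ← eq_pi_single_of_forall_exists_smul hsplit hi, hvL]

end Ray

lemma IsPrimitiveGenerator.pairingV_eq_one {d k : ℕ} {σ : Set (Vdk d k)} {v v' n : Vdk d k}
    (hv : IsPrimitiveGenerator σ v) (hn : IsLatticePtV n) (hv' : IsLatticePtV v')
    (hpos : 0 < pairingV v n) (hvv' : v = pairingV v n • v') : pairingV v n = 1 := by
  obtain ⟨z, hz⟩ := hv.1.exists_int_pairingV hn
  have hle : pairingV v n ≤ 1 := by
    by_contra! hlt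
    refine hv.2.2.2 (pairingV v n)⁻¹ (inv_pos.2 hpos) (inv_lt_one_of_one_lt₀ hlt) ?_
    rwa [(inv_smul_eq_iff₀ hpos.ne').2 hvv']
  rw [hz] at hpos hle ⊢
  exact_mod_cast le_antisymm (by exact_mod_cast hle) (by exact_mod_cast hpos : (0 : ℤ) < z)

section CayleyCone

variable {d k : ℕ} {Δ : Fin (k+1) → Set (Fin d → ℝ)}

def cayleyMap (g : Fin (k+1) → Fin d → ℝ) : (Fin (k+1) → ℝ) →ₗ[ℝ] Vdk d (k+1) :=
  (Fintype.linearCombination ℝ g).prod LinearMap.id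

lemma cayleyMap_apply (g : Fin (k+1) → Fin d → ℝ) (t : Fin (k+1) → ℝ) :
    cayleyMap g t = (∑ i, t i • g i, t) := by
  simp [cayleyMap, Fintype.linearCombination_apply]

lemma cayleyMap_single (g : Fin (k+1) → Fin d → ℝ) (i : Fin (k+1)) :
    cayleyMap g (Pi.single i 1) = (g i, Pi.single i 1) := by
  simp [cayleyMap, Fintype.linearCombination_apply_single]

lemma pairingV_cayleyMap (g : Fin (k+1) → Fin d → ℝ) (t : Fin (k+1) → ℝ) (w : Vdk d (k+1)) :
    pairingV (cayleyMap g t) w = ∑ i, t i * (pairing (g i) w.1 + w.2 i) := by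
  rw [cayleyMap_apply, pairingV, pairing_sum_left]
  simp only [pairing_smul_left, mul_add, Finset.sum_add_distrib]
  rfl

lemma cayleyMap_mem_cayleyCone {g : Fin (k+1) → Fin d → ℝ} (hg : ∀ i, g i ∈ Δ i)
    {t : Fin (k+1) → ℝ} (ht : 0 ≤ t) : cayleyMap g t ∈ cayleyCone Δ := by
  rw [cayleyMap_apply]
  exact ⟨ht, (Set.mem_fintype_sum _ _).2 ⟨_, fun i => Set.smul_mem_smul_set (hg i), rfl⟩⟩

lemma exists_cayleyMap_eq {p : Vdk d (k+1)} (hp : p ∈ cayleyCone Δ) :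
    ∃ g : Fin (k+1) → Fin d → ℝ, (∀ i, g i ∈ Δ i) ∧ cayleyMap g p.2 = p := by
  obtain ⟨x, hx, hsum⟩ := (Set.mem_fintype_sum _ _).1 hp.2
  choose g hg hgx using fun i => Set.mem_smul_set.1 (hx i)
  exact ⟨g, hg, by rw [cayleyMap_apply]; exact Prod.ext (by simp only [hgx, hsum]) rfl⟩

lemma smul_mem_cayleyCone {p : Vdk d (k+1)} (hp : p ∈ cayleyCone Δ) {c : ℝ} (hc : 0 ≤ c) :
    c • p ∈ cayleyCone Δ := by
  obtain ⟨g, hg, hgp⟩ := exists_cayleyMap_eq hp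
  rw [← hgp, ← map_smul]
  exact cayleyMap_mem_cayleyCone hg (smul_nonneg hc hp.1)

lemma mk_single_mem_cayleyCone (hne : ∀ i, (Δ i).Nonempty) {i : Fin (k+1)} {x : Fin d → ℝ}
    (hx : x ∈ Δ i) : ((x, Pi.single i 1) : Vdk d (k+1)) ∈ cayleyCone Δ := by
  choose g hg using hne
  have hmem : ∀ j, Function.update g i x j ∈ Δ j := fun j => by
    rcases eq_or_ne j i with rfl | hji
    · simpa using hx
    · simpa [hji] using hg j
  simpa [cayleyMap_single] using
    cayleyMap_mem_cayleyCone hmem (Pi.single_nonneg.2 zero_le_one : 0 ≤ Pi.single i (1 : ℝ))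

lemma mem_extremePoints_of_isExtreme_cayleyCone (hne : ∀ i, (Δ i).Nonempty) {i : Fin (k+1)}
    {g : Fin d → ℝ} (hg : g ∈ Δ i) {c : ℝ} (hc : 0 < c)
    (hext : IsExtreme ℝ (cayleyCone Δ) (nonnegRay (c • ((g, Pi.single i 1) : Vdk d (k+1))))) :
    g ∈ Set.extremePoints ℝ (Δ i) := by
  refine ⟨hg, fun x₁ hx₁ x₂ hx₂ ⟨a, b, ha, hb, hab, hgab⟩ => ?_⟩
  have hseg : c • ((g, Pi.single i 1) : Vdk d (k+1)) ∈ openSegment ℝ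
      (c • ((x₁, Pi.single i 1) : Vdk d (k+1))) (c • (x₂, Pi.single i 1)) := by
    refine ⟨a, b, ha, hb, hab, ?_⟩
    rw [smul_comm a c, smul_comm b c, ← smul_add]
    congr 1
    exact Prod.ext (by simpa using hgab) (by simp [← add_smul, hab])
  obtain ⟨t, -, ht⟩ := hext.2 (smul_mem_cayleyCone (mk_single_mem_cayleyCone hne hx₁) hc.le)
    (smul_mem_cayleyCone (mk_single_mem_cayleyCone hne hx₂) hc.le) (self_mem_nonnegRay _) hseg
  have ht1 : t = 1 := by
    have := congrFun (congrArg Prod.snd ht) i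
    simp only [Prod.smul_snd, Pi.smul_apply, Pi.single_eq_same, smul_eq_mul, mul_one] at this
    nlinarith
  rw [ht1, one_smul] at ht
  exact congrArg Prod.fst (smul_right_injective _ hc.ne' ht)

lemma IsPrimitiveGenerator.exists_eq_smul_of_cayleyCone {v : Vdk d (k+1)}
    (hv : IsPrimitiveGenerator (cayleyCone Δ) v) :
    ∃ i, ∃ g ∈ Set.extremePoints ℝ (Δ i), 0 < v.2 i ∧ v = v.2 i • (g, Pi.single i 1) := by
  have hvmem : v ∈ cayleyCone Δ := hv.2.2.1.1 (self_mem_nonnegRay v)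
  obtain ⟨g, hg, hgv⟩ := exists_cayleyMap_eq hvmem
  obtain ⟨i, hi, hvi⟩ := exists_eq_smul_single_of_isExtreme
    (fun x hx c hc => smul_mem_cayleyCone hx hc) (cayleyMap g) (fun t => by rw [cayleyMap_apply])
    (fun t => cayleyMap_mem_cayleyCone hg) hv.2.2.1 hv.2.1 hgv hvmem.1
  rw [cayleyMap_single] at hvi
  refine ⟨i, g i, ?_, hi, hvi⟩
  exact mem_extremePoints_of_isExtreme_cayleyCone (fun j => ⟨g j, hg j⟩) (hg i) hi
    (hvi ▸ hv.2.2.1)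

lemma pairingV_smul_mk_single_one (c : ℝ) (x : Fin d → ℝ) (i : Fin (k+1)) :
    pairingV (c • ((x, Pi.single i 1) : Vdk d (k+1))) (0, fun _ => 1) = c := by
  simp [pairingV, pairing_eq_dotProduct]

theorem IsPrimitiveGenerator.pairingV_cayleyCone_eq_one (hlat : ∀ i, IsLatticePolytope (Δ i))
    {v : Vdk d (k+1)} (hv : IsPrimitiveGenerator (cayleyCone Δ) v) :
    pairingV v (0, fun _ => 1) = 1 := by
  obtain ⟨i, g, hg, hpos, hvg⟩ := hv.exists_eq_smul_of_cayleyCone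
  have hc : pairingV v (0, fun _ => 1) = v.2 i := by
    rw [hvg, pairingV_smul_mk_single_one, ← hvg]
  refine hv.pairingV_eq_one isLatticePtV_zero_one
    ⟨(hlat i).isLatticePt_of_mem_extremePoints hg, isLatticePt_pi_single_one i⟩
    (hc ▸ hpos) (hc ▸ hvg)

end CayleyCone

lemma smul_mem_dualConeV {d k : ℕ} {σ : Set (Vdk d k)} {w : Vdk d k} (hw : w ∈ dualConeV σ)
    {c : ℝ} (hc : 0 ≤ c) : c • w ∈ dualConeV σ := fun x hx => by
  rw [pairingV_comm, pairingV_smul_left, pairingV_comm]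
  exact mul_nonneg hc (hw x hx)

section DualCone

variable {d k : ℕ} {Δ : Fin (k+1) → Set (Fin d → ℝ)}

lemma mem_dualConeV_cayleyCone_iff (hlat : ∀ i, IsLatticePolytope (Δ i))
    (hne : ∀ i, (Δ i).Nonempty) {w : Vdk d (k+1)} :
    w ∈ dualConeV (cayleyCone Δ) ↔ ∀ i, 0 ≤ minPair (Δ i) w.1 + w.2 i := by
  refine ⟨fun hw i => ?_, fun hw p hp => ?_⟩
  · obtain ⟨x, hx, -, hmin⟩ := (hlat i).exists_isLatticePt_isMinOn (hne i) w.1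
    have h := hw _ (mk_single_mem_cayleyCone hne hx)
    simp only [pairingV, pairing_eq_dotProduct, single_dotProduct, one_mul] at h
    rwa [hmin.minPair_eq hx]
  · obtain ⟨g, hg, hgp⟩ := exists_cayleyMap_eq hp
    rw [← hgp, pairingV_cayleyMap]
    exact Finset.sum_nonneg fun i _ => mul_nonneg (hp.1 i)
      ((hw i).trans (add_le_add_left (minPair_le (hlat i) (hne i) w.1 (hg i)) _))

variable (Δ) in
def cayleyDualPoint (y : Fin d → ℝ) : Vdk d (k+1) := (y, fun i => -minPair (Δ i) y)

lemma cayleyDualPoint_mem_dualConeV (hlat : ∀ i, IsLatticePolytope (Δ i))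
    (hne : ∀ i, (Δ i).Nonempty) (y : Fin d → ℝ) :
    cayleyDualPoint Δ y ∈ dualConeV (cayleyCone Δ) :=
  (mem_dualConeV_cayleyCone_iff hlat hne).2 fun i => by simp [cayleyDualPoint]

lemma cayleyDualPoint_smul (hlat : ∀ i, IsLatticePolytope (Δ i)) (hne : ∀ i, (Δ i).Nonempty)
    {c : ℝ} (hc : 0 ≤ c) (y : Fin d → ℝ) :
    cayleyDualPoint Δ (c • y) = c • cayleyDualPoint Δ y :=
  Prod.ext rfl (funext fun i => by simp [cayleyDualPoint, minPair_smul (hlat i) (hne i) hc])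

lemma pairingV_cayleyDualPoint_zero_one (y : Fin d → ℝ) :
    pairingV (cayleyDualPoint Δ y) (0, fun _ => 1) = -∑ i, minPair (Δ i) y := by
  simp [cayleyDualPoint, pairingV, pairing]

lemma IsLatticePt.isLatticePtV_cayleyDualPoint (hlat : ∀ i, IsLatticePolytope (Δ i))
    (hne : ∀ i, (Δ i).Nonempty) {y : Fin d → ℝ} (hy : IsLatticePt y) :
    IsLatticePtV (cayleyDualPoint Δ y) := by
  refine ⟨hy, fun i => ?_⟩
  obtain ⟨z, hz⟩ := (hlat i).exists_int_minPair (hne i) hy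
  exact ⟨-z, by simp [cayleyDualPoint, hz]⟩

lemma eq_cayleyDualPoint_of_isExtreme (hlat : ∀ i, IsLatticePolytope (Δ i))
    (hne : ∀ i, (Δ i).Nonempty) {w : Vdk d (k+1)}
    (hw : IsExtreme ℝ (dualConeV (cayleyCone Δ)) (nonnegRay w)) (hw1 : w.1 ≠ 0) :
    w = cayleyDualPoint Δ w.1 := by
  have hdual (z : Vdk d (k+1)) := mem_dualConeV_cayleyCone_iff hlat hne (w := z)
  have hwσ := (hdual w).1 (hw.1 (self_mem_nonnegRay w))
  refine Prod.ext rfl (funext fun j => ?_)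
  set ε := minPair (Δ j) w.1 + w.2 j
  -- the slack `ε` at `j` can be split off as the summand `(0, ε rⱼ)` of `w`
  have hP : ((0, Pi.single j ε) : Vdk d (k+1)) ∈ dualConeV (cayleyCone Δ) :=
    (hdual _).2 fun i => by
      rw [minPair_zero (hne i), zero_add]
      rcases eq_or_ne i j with rfl | hij
      · simpa using hwσ i
      · simp [hij]
  have hQ : ((w.1, w.2 - Pi.single j ε) : Vdk d (k+1)) ∈ dualConeV (cayleyCone Δ) :=
    (hdual _).2 fun i => by
      rcases eq_or_ne i j with rfl | hij
      · simp [ε]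
      · simpa [hij] using hwσ i
  obtain ⟨t, ht⟩ := hw.exists_eq_smul_of_add_eq (fun x hx c hc => smul_mem_dualConeV hx hc) hP hQ
    (Prod.ext (zero_add _) (add_sub_cancel _ _))
  have ht0 : t = 0 := by
    simpa [hw1, eq_comm] using congrArg Prod.fst ht
  have hε : ε = 0 := by
    simpa [ht0] using congrFun (congrArg Prod.snd ht) j
  simp only [cayleyDualPoint]
  linarith

lemma mem_extremePoints_polarDual_of_isExtreme (hlat : ∀ i, IsLatticePolytope (Δ i))
    (hne : ∀ i, (Δ i).Nonempty) {y : Fin d → ℝ} (hy : ∑ i, minPair (Δ i) y = -1) {c : ℝ}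
    (hc : 0 < c)
    (hext : IsExtreme ℝ (dualConeV (cayleyCone Δ)) (nonnegRay (c • cayleyDualPoint Δ y))) :
    y ∈ Set.extremePoints ℝ (polarDual (∑ i, Δ i)) := by
  refine ⟨(mem_polarDual_sum_iff hlat hne).2 hy.ge, fun p hp q hq ⟨a, b, ha, hb, hab, hpq⟩ => ?_⟩
  rw [mem_polarDual_sum_iff hlat hne] at hp hq
  have hconc : ∀ i, a * minPair (Δ i) p + b * minPair (Δ i) q ≤ minPair (Δ i) y := fun i => by
    rw [← hpq, ← minPair_smul (hlat i) (hne i) ha.le, ← minPair_smul (hlat i) (hne i) hb.le]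
    exact add_le_minPair_add (hlat i) (hne i) _ _
  have hsum : a * ∑ i, minPair (Δ i) p + b * ∑ i, minPair (Δ i) q = -1 := by
    have := Finset.sum_le_sum fun i (_ : i ∈ Finset.univ) => hconc i
    rw [Finset.sum_add_distrib, ← Finset.mul_sum, ← Finset.mul_sum, hy] at this
    nlinarith
  -- concavity of each `minPair (Δ i)` is tight along the segment, so `c • cayleyDualPoint Δ`
  -- maps it onto a segment of the dual cone through `c • cayleyDualPoint Δ y`
  have htight : ∀ i, a * minPair (Δ i) p + b * minPair (Δ i) q = minPair (Δ i) y :=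
    fun i => (Finset.sum_eq_sum_iff_of_le fun i _ => hconc i).1
      (by rw [Finset.sum_add_distrib, ← Finset.mul_sum, ← Finset.mul_sum, hsum, hy])
      i (Finset.mem_univ i)
  have hseg : c • cayleyDualPoint Δ y ∈
      openSegment ℝ (c • cayleyDualPoint Δ p) (c • cayleyDualPoint Δ q) := by
    refine ⟨a, b, ha, hb, hab, ?_⟩
    rw [smul_comm a c, smul_comm b c, ← smul_add]
    congr 1
    refine Prod.ext hpq (funext fun i => ?_)
    simp only [cayleyDualPoint, Prod.smul_mk, Prod.mk_add_mk, Pi.add_apply, Pi.smul_apply,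
      smul_eq_mul, ← htight i]
    ring
  have hmem (z : Fin d → ℝ) : c • cayleyDualPoint Δ z ∈ dualConeV (cayleyCone Δ) :=
    smul_mem_dualConeV (cayleyDualPoint_mem_dualConeV hlat hne z) hc.le
  obtain ⟨t, -, ht⟩ := hext.2 (hmem p) (hmem q) (self_mem_nonnegRay _) hseg
  have hp1 : ∑ i, minPair (Δ i) p = -1 := by nlinarith
  have ht1 : t = 1 := by
    have := congrArg (pairingV · (0, fun _ => 1)) ht
    simp only [pairingV_smul_left, pairingV_cayleyDualPoint_zero_one, hp1, hy] at this
    nlinarith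
  rw [ht1, one_smul] at ht
  exact congrArg Prod.fst (smul_right_injective _ hc.ne' ht)

lemma IsPrimitiveGenerator.exists_eq_smul_of_dualConeV_of_fst_eq_zero
    (hlat : ∀ i, IsLatticePolytope (Δ i)) (hne : ∀ i, (Δ i).Nonempty) {w : Vdk d (k+1)}
    (hw : IsPrimitiveGenerator (dualConeV (cayleyCone Δ)) w) (hw1 : w.1 = 0) :
    ∃ i, 0 < w.2 i ∧ w = w.2 i • ((0, Pi.single i 1) : Vdk d (k+1)) := by
  have hdual (z : Vdk d (k+1)) := mem_dualConeV_cayleyCone_iff hlat hne (w := z)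
  have hwσ := (hdual w).1 (hw.2.2.1.1 (self_mem_nonnegRay w))
  simp only [hw1, minPair_zero (hne _), zero_add] at hwσ
  exact exists_eq_smul_single_of_isExtreme (fun x hx c hc => smul_mem_dualConeV hx hc)
    (LinearMap.inr ℝ _ _) (fun _ => rfl)
    (fun t ht => (hdual _).2 fun i => by simpa [minPair_zero (hne i)] using ht i)
    hw.2.2.1 hw.2.1 (Prod.ext hw1.symm rfl) hwσ

lemma IsPrimitiveGenerator.exists_eq_smul_cayleyDualPoint_of_fst_ne_zero
    (hlat : ∀ i, IsLatticePolytope (Δ i)) (hne : ∀ i, (Δ i).Nonempty)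
    (hrefl : IsReflexive (∑ i, Δ i)) {w : Vdk d (k+1)}
    (hw : IsPrimitiveGenerator (dualConeV (cayleyCone Δ)) w) (hw1 : w.1 ≠ 0) :
    ∃ D : ℝ, 0 < D ∧ ∃ y ∈ Set.extremePoints ℝ (polarDual (∑ i, Δ i)),
      ∑ i, minPair (Δ i) y = -1 ∧ w = D • cayleyDualPoint Δ y := by
  set D := -∑ i, minPair (Δ i) w.1
  have hD : 0 < D :=
    neg_pos.2 (minPair_sum hlat hne w.1 ▸ minPair_neg_of_mem_interior hrefl.1 hrefl.2.1 hw1)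
  have hwy : w = D • cayleyDualPoint Δ (D⁻¹ • w.1) := by
    rw [← cayleyDualPoint_smul hlat hne hD.le, smul_inv_smul₀ hD.ne']
    exact eq_cayleyDualPoint_of_isExtreme hlat hne hw.2.2.1 hw1
  have hy : ∑ i, minPair (Δ i) (D⁻¹ • w.1) = -1 := by
    simp only [minPair_smul (hlat _) (hne _) (inv_nonneg.2 hD.le), ← Finset.mul_sum]
    field_simp
    ring
  exact ⟨D, hD, _, mem_extremePoints_polarDual_of_isExtreme hlat hne hy hD (hwy ▸ hw.2.2.1),
    hy, hwy⟩

theorem IsPrimitiveGenerator.pairingV_dualConeV_cayleyCone_eq_one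
    (hlat : ∀ i, IsLatticePolytope (Δ i)) (hrefl : IsReflexive (∑ i, Δ i)) {w : Vdk d (k+1)}
    (hw : IsPrimitiveGenerator (dualConeV (cayleyCone Δ)) w) :
    pairingV w (0, fun _ => 1) = 1 := by
  have hne : ∀ i, (Δ i).Nonempty := fun i => by
    obtain ⟨x, hx, -⟩ := (Set.mem_fintype_sum _ _).1 (interior_subset hrefl.2.1)
    exact ⟨x i, hx i⟩
  by_cases hw1 : w.1 = 0
  · obtain ⟨i, hpos, hwi⟩ := hw.exists_eq_smul_of_dualConeV_of_fst_eq_zero hlat hne hw1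
    have hc : pairingV w (0, fun _ => 1) = w.2 i := by
      rw [hwi, pairingV_smul_mk_single_one, ← hwi]
    exact hw.pairingV_eq_one isLatticePtV_zero_one
      ⟨fun _ => ⟨0, by simp⟩, isLatticePt_pi_single_one i⟩ (hc ▸ hpos) (hc ▸ hwi)
  · obtain ⟨D, hD, y, hyext, hy, hwy⟩ :=
      hw.exists_eq_smul_cayleyDualPoint_of_fst_ne_zero hlat hne hrefl hw1
    have hylat : IsLatticePt y := hrefl.2.2.isLatticePt_of_mem_extremePoints hyext
    have hc : pairingV w (0, fun _ => 1) = D := by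
      rw [hwy, pairingV_smul_left, pairingV_cayleyDualPoint_zero_one, hy, neg_neg, mul_one]
    exact hw.pairingV_eq_one isLatticePtV_zero_one (hylat.isLatticePtV_cayleyDualPoint hlat hne)
      (hc ▸ hD) (hc ▸ hwy)

end DualCone

/-- the Cayley cone of a Minkowski sum decomposition of a reflexive polytope is a
reflexive Gorenstein cone of index `k+1`, with distinguished points
`n_σ̄ = r₀* + ⋯ + r_k*` and `m_σ̄∨ = r₀ + ⋯ + r_k`. -/
theorem cayleyCone_reflexive_gorenstein {d k : ℕ}
    (Δ : Fin (k+1) → Set (Fin d → ℝ))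
    (hlat : ∀ i, IsLatticePolytope (Δ i))
    (hrefl : IsReflexive (∑ i, Δ i)) :
    (∀ v, IsPrimitiveGenerator (cayleyCone Δ) v →
        pairingV v (((0 : Fin d → ℝ), fun _ => 1) : Vdk d (k+1)) = 1) ∧
    (∀ w, IsPrimitiveGenerator (dualConeV (cayleyCone Δ)) w →
        pairingV (((0 : Fin d → ℝ), fun _ => 1) : Vdk d (k+1)) w = 1) ∧
    pairingV (((0 : Fin d → ℝ), fun _ => 1) : Vdk d (k+1))
        (((0 : Fin d → ℝ), fun _ => 1) : Vdk d (k+1)) = k + 1 := by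
  refine ⟨fun v hv => hv.pairingV_cayleyCone_eq_one hlat, fun w hw => ?_, ?_⟩
  · rw [pairingV_comm]
    exact hw.pairingV_dualConeV_cayleyCone_eq_one hlat hrefl
  · simp [pairingV, pairing]
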